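/- arXiv:2509.03993 — 2 statements merged into one kernel-verified Lean document; each statement's English description precedes it below -/
import Mathlib

section
/- Let $p$ be an odd prime and $N \geq 1$. A triple of nonnegative integers $(s_1, s_2, s_3)$ with $s_1 + s_2 + s_3 \leq p^N - 2$ and $|s_2 - s_3| \leq s_1 \leq s_2 + s_3$ satisfies the following equivalence for each positive integer $N' < N$: there exists a triple $(s_1', s_2', s_3')$ with $s_i' \in \{[s_i]_{N'},\, p^{N'} - 1 - [s_i]_{N'}\}$ for $i = 1, 2, 3$ such that $s_1' + s_2' + s_3' \leq p^{N'} - 2$ and $|s_2' - s_3'| \leq s_1' \leq s_2' + s_3'$, if and only if the triple $(\hat{s}_1, \hat{s}_2, \hat{s}_3)$ satisfies $\hat{s}_1 + \hat{s}_2 + \hat{s}_3 \leq p^{N'} - 2$ and $|\hat{s}_2 - \hat{s}_3| \leq \hat{s}_1 \leq \hat{s}_2 + \hat{s}_3$. -/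
/-!
STATEMENT 3: For an odd prime `p`, `N ≥ 1`, and a triple of nonnegative integers
`(s₁, s₂, s₃)` with `s₁ + s₂ + s₃ ≤ p^N - 2` and `|s₂ - s₃| ≤ s₁ ≤ s₂ + s₃`:
for each `0 < N' < N`, the existence of a triple `(s₁', s₂', s₃')` with
`sᵢ' ∈ {[sᵢ]_{N'}, p^{N'} - 1 - [sᵢ]_{N'}}` satisfying `s₁' + s₂' + s₃' ≤ p^{N'} - 2`
and `|s₂' - s₃'| ≤ s₁' ≤ s₂' + s₃'` is equivalent to the triple `(ŝ₁, ŝ₂, ŝ₃)`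
(with `â := min([a]_{N'}, p^{N'} - 1 - [a]_{N'})`) satisfying
`ŝ₁ + ŝ₂ + ŝ₃ ≤ p^{N'} - 2` and `|ŝ₂ - ŝ₃| ≤ ŝ₁ ≤ ŝ₂ + ŝ₃`.
-/

/-- `[a]_{N'}` followed by folding: `â = min([a]_{N'}, p^{N'} - 1 - [a]_{N'})`. -/
def hatRed (p N' a : ℕ) : ℕ := min (a % p ^ N') (p ^ N' - 1 - a % p ^ N')

/-- Arithmetic core: any valid choice forces the min-triple to be valid. -/
theorem daggerC_core (q r1 r2 r3 a b c : ℕ) (hq : 0 < q)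
    (h1 : r1 < q) (h2 : r2 < q) (h3 : r3 < q)
    (ha : a = r1 ∨ a = q - 1 - r1) (hb : b = r2 ∨ b = q - 1 - r2)
    (hc : c = r3 ∨ c = q - 1 - r3)
    (hs : a + b + c ≤ q - 2)
    (t1 : (b : ℤ) - c ≤ a) (t2 : (c : ℤ) - b ≤ a) (t3 : a ≤ b + c) :
    min r1 (q - 1 - r1) + min r2 (q - 1 - r2) + min r3 (q - 1 - r3) ≤ q - 2 ∧
    (((min r2 (q - 1 - r2) : ℕ) : ℤ) - ((min r3 (q - 1 - r3) : ℕ) : ℤ) ≤ ((min r1 (q - 1 - r1) : ℕ) : ℤ) ∧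
     ((min r3 (q - 1 - r3) : ℕ) : ℤ) - ((min r2 (q - 1 - r2) : ℕ) : ℤ) ≤ ((min r1 (q - 1 - r1) : ℕ) : ℤ)) ∧
    min r1 (q - 1 - r1) ≤ min r2 (q - 1 - r2) + min r3 (q - 1 - r3) := by
  omega

theorem daggerC_second_condition_iff
    (p : ℕ) (hp : p.Prime) (hodd : Odd p) (N N' : ℕ) (hN : 1 ≤ N)
    (hN'pos : 0 < N') (hN'N : N' < N)
    (s₁ s₂ s₃ : ℕ)
    (hsum : s₁ + s₂ + s₃ ≤ p ^ N - 2)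
    (htri : |(s₂ : ℤ) - (s₃ : ℤ)| ≤ (s₁ : ℤ) ∧ s₁ ≤ s₂ + s₃) :
    (∃ s₁' s₂' s₃' : ℕ,
        (s₁' = s₁ % p ^ N' ∨ s₁' = p ^ N' - 1 - s₁ % p ^ N') ∧
        (s₂' = s₂ % p ^ N' ∨ s₂' = p ^ N' - 1 - s₂ % p ^ N') ∧
        (s₃' = s₃ % p ^ N' ∨ s₃' = p ^ N' - 1 - s₃ % p ^ N') ∧
        s₁' + s₂' + s₃' ≤ p ^ N' - 2 ∧
        |(s₂' : ℤ) - (s₃' : ℤ)| ≤ (s₁' : ℤ) ∧ s₁' ≤ s₂' + s₃') ↔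
      (hatRed p N' s₁ + hatRed p N' s₂ + hatRed p N' s₃ ≤ p ^ N' - 2 ∧
        |(hatRed p N' s₂ : ℤ) - (hatRed p N' s₃ : ℤ)| ≤ (hatRed p N' s₁ : ℤ) ∧
        hatRed p N' s₁ ≤ hatRed p N' s₂ + hatRed p N' s₃) := by
  have hq : 0 < p ^ N' := pow_pos hp.pos N'
  simp only [hatRed, abs_sub_le_iff]
  constructor
  · rintro ⟨a, b, c, ha, hb, hc, h1, ⟨h2, h3⟩, h4⟩
    exact daggerC_core (p ^ N') (s₁ % p ^ N') (s₂ % p ^ N') (s₃ % p ^ N') a b c hq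
      (Nat.mod_lt _ hq) (Nat.mod_lt _ hq) (Nat.mod_lt _ hq) ha hb hc h1 h2 h3 h4
  · rintro ⟨h1, ⟨h2, h3⟩, h4⟩
    exact ⟨_, _, _, min_choice _ _, min_choice _ _, min_choice _ _, h1, ⟨h2, h3⟩, h4⟩
end

section
/- For every integer $n \geq 2$, the identity $\sum_{\theta=1}^{n-1} \frac{1}{\sin^4(\pi\theta/n)} = \frac{(n^2-1)(n^2+11)}{45}$ holds. -/
open Real

/-!
Let `ζ = exp (2πi/n)` and `0 < θ < n`, so that `z = ζ^θ` is an `n`-th root of unity other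
than `1`. On one hand `(1 - z)² = -4 z sin² (πθ/n)`; on the other hand the second differences of
`k ↦ k (n - k)` are constant, which gives `(1 - z)² ∑_{k<n} k (n - k) zᵏ = 2 n z`. Hence
`n / sin² (πθ/n) = -2 F θ`, where `F θ = ∑_{k<n} k (n - k) ζ^{θk}` is the discrete Fourier
transform of `k ↦ k (n - k)`. Parseval's identity for this transform, with the `θ = 0` term
removed, gives `n² ∑ 1 / sin⁴ (πθ/n) = 4 (n ∑ k² (n - k)² - (∑ k (n - k))²)`, and the two power
sums are `(n⁵ - n) / 30` and `(n³ - n) / 6`.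
-/

open Finset

section PowerSums

variable {R : Type*} [CommRing R]

theorem one_sub_sq_mul_sum_range_mul_sub_mul_pow (z : R) (n m : ℕ) :
    (1 - z) ^ 2 * ∑ k ∈ range m, (k : R) * (n - k) * z ^ k
      = (n + 1) * z - 2 * z * ∑ k ∈ range m, z ^ k - m * (n - m) * z ^ m
        + (m - 1) * (n - m + 1) * z ^ (m + 1) := by
  induction m with
  | zero => simp only [range_zero, sum_empty, Nat.cast_zero]; ring
  | succ m ih =>
    rw [sum_range_succ, sum_range_succ, mul_add, ih]
    push_cast
    ring

theorem one_sub_sq_mul_sum_range_mul_sub_mul_pow_of_pow_eq_one {K : Type*} [Field K] {z : K}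
    {n : ℕ} (hz : z ^ n = 1) (hz1 : z ≠ 1) :
    (1 - z) ^ 2 * ∑ k ∈ range n, (k : K) * (n - k) * z ^ k = 2 * n * z := by
  have hgeom : ∑ k ∈ range n, z ^ k = 0 := by
    rw [geom_sum_eq hz1, hz, sub_self, zero_div]
  rw [one_sub_sq_mul_sum_range_mul_sub_mul_pow, hgeom, pow_succ, hz]
  ring

theorem six_mul_sum_range_mul_sub (n m : ℕ) :
    6 * ∑ k ∈ range m, (k : R) * (n - k)
      = 3 * n * m * (m - 1) - (m - 1) * m * (2 * m - 1) := by
  induction m with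
  | zero => simp
  | succ m ih =>
    rw [sum_range_succ, mul_add, ih]
    push_cast
    ring

theorem thirty_mul_sum_range_mul_sub_sq (n m : ℕ) :
    30 * ∑ k ∈ range m, ((k : R) * (n - k)) ^ 2
      = 5 * n ^ 2 * (m - 1) * m * (2 * m - 1) - 15 * n * m ^ 2 * (m - 1) ^ 2
        + (m - 1) * m * (2 * m - 1) * (3 * m ^ 2 - 3 * m - 1) := by
  induction m with
  | zero => simp
  | succ m ih =>
    rw [sum_range_succ, mul_add, ih]
    push_cast
    ring

end PowerSums

namespace IsPrimitiveRoot

variable {R : Type*} [CommRing R] [IsDomain R] {ζ : R} {n : ℕ}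

theorem sum_pow_pow_eq_ite (hζ : IsPrimitiveRoot ζ n) (m : ℕ) :
    ∑ θ ∈ range n, (ζ ^ θ) ^ m = if n ∣ m then (n : R) else 0 := by
  simp_rw [← pow_mul, mul_comm _ m, pow_mul]
  split_ifs with hdvd
  · simp [(hζ.pow_eq_one_iff_dvd m).2 hdvd]
  · have hne : ζ ^ m - 1 ≠ 0 := sub_ne_zero.2 fun h ↦ hdvd ((hζ.pow_eq_one_iff_dvd m).1 h)
    refine (mul_left_inj' hne).1 ?_
    rw [geom_sum_mul, pow_right_comm, hζ.pow_eq_one, one_pow, sub_self, zero_mul]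

theorem sum_sq_sum_mul_pow_pow (hζ : IsPrimitiveRoot ζ n) (a : ℕ → R) :
    ∑ θ ∈ range n, (∑ k ∈ range n, a k * (ζ ^ θ) ^ k) ^ 2
      = n * ∑ k ∈ range n, a k * a ((n - k) % n) := by
  have hdual : ∀ j ∈ range n, ∀ l ∈ range n, n ∣ j + l ↔ l = (n - j) % n := by
    intro j hj l hl
    rw [mem_range] at hj hl
    rcases Nat.eq_zero_or_pos j with rfl | hj0
    · rw [Nat.sub_zero, Nat.mod_self, zero_add]
      exact ⟨fun h ↦ Nat.eq_zero_of_dvd_of_lt h hl, fun h ↦ h ▸ dvd_zero n⟩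
    · rw [Nat.mod_eq_of_lt (by omega : n - j < n)]
      exact ⟨fun h ↦ by have := Nat.eq_of_dvd_of_lt_two_mul (by omega) h (by omega); omega,
        fun h ↦ ⟨1, by omega⟩⟩
  calc ∑ θ ∈ range n, (∑ k ∈ range n, a k * (ζ ^ θ) ^ k) ^ 2
      = ∑ j ∈ range n, ∑ l ∈ range n, a j * a l * ∑ θ ∈ range n, (ζ ^ θ) ^ (j + l) := by
        simp_rw [sq, sum_mul_sum, mul_sum]
        rw [sum_comm]
        refine sum_congr rfl fun j _ ↦ ?_
        rw [sum_comm]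
        exact sum_congr rfl fun l _ ↦ sum_congr rfl fun θ _ ↦ by ring
    _ = ∑ j ∈ range n, a j * (n * a ((n - j) % n)) := by
        refine sum_congr rfl fun j hj ↦ ?_
        have hn : 0 < n := by have := mem_range.1 hj; omega
        calc ∑ l ∈ range n, a j * a l * ∑ θ ∈ range n, (ζ ^ θ) ^ (j + l)
            = ∑ l ∈ range n, if l = (n - j) % n then a j * a l * n else 0 :=
              sum_congr rfl fun l hl ↦ by
                simp only [hζ.sum_pow_pow_eq_ite, hdual j hj l hl, mul_ite, mul_zero]
          _ = a j * (n * a ((n - j) % n)) := by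
              rw [sum_ite_eq' _ _ (fun l ↦ a j * a l * n),
                if_pos (mem_range.2 (Nat.mod_lt _ hn))]
              ring
    _ = n * ∑ k ∈ range n, a k * a ((n - k) % n) := by
        rw [mul_sum]
        exact sum_congr rfl fun k _ ↦ by ring

theorem sum_sq_sum_range_mul_sub_mul_pow (hζ : IsPrimitiveRoot ζ n) :
    ∑ θ ∈ range n, (∑ k ∈ range n, (k : R) * (n - k) * (ζ ^ θ) ^ k) ^ 2
      = n * ∑ k ∈ range n, ((k : R) * (n - k)) ^ 2 := by
  rw [hζ.sum_sq_sum_mul_pow_pow fun k ↦ (k : R) * (n - k)]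
  congr 1
  refine sum_congr rfl fun k hk ↦ ?_
  rw [mem_range] at hk
  rcases Nat.eq_zero_or_pos k with rfl | hk0
  · simp
  · rw [Nat.mod_eq_of_lt (by omega : n - k < n), Nat.cast_sub hk.le]
    ring

end IsPrimitiveRoot

namespace Complex

theorem one_sub_exp_two_mul_I_sq (x : ℂ) :
    (1 - exp (2 * x * I)) ^ 2 = -4 * exp (2 * x * I) * sin x ^ 2 := by
  have hu : exp (x * I) ≠ 0 := exp_ne_zero _
  rw [sin, neg_mul x, exp_neg, mul_assoc, two_mul, exp_add]
  field_simp
  linear_combination 4 * (1 - exp (x * I) ^ 2) ^ 2 * I_sq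

theorem natCast_div_sin_sq {x : ℂ} {n : ℕ} (hpow : exp (2 * x * I) ^ n = 1)
    (hne : exp (2 * x * I) ≠ 1) :
    n / sin x ^ 2 = -2 * ∑ k ∈ range n, (k : ℂ) * (n - k) * exp (2 * x * I) ^ k := by
  set z := exp (2 * x * I)
  have hkernel := one_sub_sq_mul_sum_range_mul_sub_mul_pow_of_pow_eq_one hpow hne
  have htrig : (1 - z) ^ 2 = -4 * z * sin x ^ 2 := one_sub_exp_two_mul_I_sq x
  have hsin : sin x ^ 2 ≠ 0 := by
    intro h
    rw [h, mul_zero, sq_eq_zero_iff, sub_eq_zero] at htrig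
    exact hne htrig.symm
  have hz : z ≠ 0 := exp_ne_zero _
  rw [div_eq_iff hsin]
  refine mul_left_cancel₀ (mul_ne_zero (by norm_num : (-4 : ℂ) ≠ 0) hz) ?_
  linear_combination 2 * hkernel - 2 * (∑ k ∈ range n, (k : ℂ) * (n - k) * z ^ k) * htrig

theorem natCast_div_sin_pi_mul_div_sq {n θ : ℕ} (hθ0 : θ ≠ 0) (hθn : θ < n) :
    n / sin (π * θ / n) ^ 2
      = -2 * ∑ k ∈ range n, (k : ℂ) * (n - k) * (exp (2 * π * I / n) ^ θ) ^ k := by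
  have hζ := isPrimitiveRoot_exp n (by omega)
  have hexp : exp (2 * (π * θ / n) * I) = exp (2 * π * I / n) ^ θ := by
    rw [← exp_nat_mul]
    ring_nf
  rw [← hexp]
  refine natCast_div_sin_sq ?_ ?_ <;> rw [hexp]
  · rw [pow_right_comm, hζ.pow_eq_one, one_pow]
  · exact hζ.pow_ne_one_of_pos_of_lt hθ0 hθn

theorem natCast_sq_mul_sum_one_div_sin_pi_mul_div_pow_four {n : ℕ} (hn : n ≠ 0) :
    (n : ℂ) ^ 2 * ∑ θ ∈ Icc 1 (n - 1), 1 / sin (π * θ / n) ^ 4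
      = 4 * (n * ∑ k ∈ range n, ((k : ℂ) * (n - k)) ^ 2
          - (∑ k ∈ range n, (k : ℂ) * (n - k)) ^ 2) := by
  set F : ℕ → ℂ := fun θ ↦ ∑ k ∈ range n, (k : ℂ) * (n - k) * (exp (2 * π * I / n) ^ θ) ^ k
  have hcsc : ∀ θ ∈ Icc 1 (n - 1), (n : ℂ) ^ 2 / sin (π * θ / n) ^ 4 = 4 * F θ ^ 2 := by
    intro θ hθ
    rw [mem_Icc] at hθ
    rw [show (4 : ℕ) = 2 * 2 from rfl, pow_mul, ← div_pow,
      natCast_div_sin_pi_mul_div_sq (by omega) (by omega)]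
    ring
  have hsplit : ∑ θ ∈ range n, F θ ^ 2 = F 0 ^ 2 + ∑ θ ∈ Icc 1 (n - 1), F θ ^ 2 := by
    have hrange : range n = insert 0 (Icc 1 (n - 1)) := by
      ext θ
      simp only [mem_range, mem_insert, mem_Icc]
      omega
    rw [hrange, sum_insert (by simp)]
  rw [mul_sum]
  simp_rw [mul_one_div]
  rw [sum_congr rfl hcsc, ← mul_sum, ← (isPrimitiveRoot_exp n hn).sum_sq_sum_range_mul_sub_mul_pow,
    hsplit]
  simp [F]

end Complex

theorem csc_pow_four_sum (n : ℕ) (hn : 2 ≤ n) :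
    ∑ θ ∈ Finset.Icc 1 (n - 1), 1 / Real.sin (π * θ / n) ^ 4
      = ((n : ℝ) ^ 2 - 1) * ((n : ℝ) ^ 2 + 11) / 45 := by
  have hn0 : n ≠ 0 := by omega
  have hsum := Complex.natCast_sq_mul_sum_one_div_sin_pi_mul_div_pow_four hn0
  have h1 : 6 * ∑ k ∈ range n, (k : ℂ) * (n - k) = n ^ 3 - n := by
    rw [six_mul_sum_range_mul_sub]; ring
  have h2 : 30 * ∑ k ∈ range n, ((k : ℂ) * (n - k)) ^ 2 = n ^ 5 - n := by
    rw [thirty_mul_sum_range_mul_sub_sq]; ring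
  apply Complex.ofReal_injective
  push_cast
  refine mul_left_cancel₀ (pow_ne_zero 2 (Nat.cast_ne_zero.2 hn0)) ?_
  linear_combination
    hsum + (4 * n / 30) * h2 - (6 * ∑ k ∈ range n, (k : ℂ) * (n - k) + n ^ 3 - n) / 9 * h1
end
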